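/- arXiv:1410.0520 — 2 statements merged into one kernel-verified Lean document; each statement's English description precedes it below -/
import Mathlib

section
/- Stability estimate for the penalized ODE: let g₁, g₂ ∈ C¹([0,1]) with gᵢ(0) = 0, x ≥ 0, ε > 0, and let fᵢ^ε solve fᵢ^ε(t) = x + (1/ε)∫₀ᵗ (fᵢ^ε(s))⁻ ds + gᵢ(t). Then sup_{t∈[0,1]} |f₁^ε(t) - f₂^ε(t)| ≤ 2·sup_{t∈[0,1]} |g₁(t) - g₂(t)|, uniformly in ε. -/
/-! The difference `d = (f₁ - g₁) - (f₂ - g₂) = ε⁻¹ ∫₀ᵗ (f₁⁻ - f₂⁻)` starts at `0`. Wherever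
`d > K := sup |g₁ - g₂|` we get `f₁ > f₂`, hence `f₁⁻ ≤ f₂⁻`, so `d` cannot grow there and stays
`≤ K`. By symmetry `|d| ≤ K`, and `|f₁ - f₂| ≤ |d| + |g₁ - g₂| ≤ 2K`. -/

open Set intervalIntegral

theorem hasDerivWithinAt_integral_Icc {E : Type*} [NormedAddCommGroup E] [NormedSpace ℝ E]
    [CompleteSpace E] {φ : ℝ → E} {a b t : ℝ} (hφ : ContinuousOn φ (Icc a b))
    (ht : t ∈ Icc a b) :
    HasDerivWithinAt (fun u => ∫ s in a..u, φ s) (φ t) (Icc a b) t := by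
  have : Fact (t ∈ Icc a b) := ⟨ht⟩
  exact integral_hasDerivWithinAt_right
    ((hφ.mono (Icc_subset_Icc_right ht.2)).intervalIntegrable_of_Icc ht.1)
    (hφ.stronglyMeasurableAtFilter_nhdsWithin measurableSet_Icc t) (hφ t ht)

/-- Non-strict variant of `image_le_of_deriv_right_lt_deriv_boundary`, from the strict barriers
`K + δ (1 + (y - a))` as `δ → 0`. -/
theorem le_of_hasDerivWithinAt_Ici_nonpos_of_lt {f f' : ℝ → ℝ} {a b K : ℝ}
    (hf : ContinuousOn f (Icc a b))
    (hf' : ∀ x ∈ Ico a b, HasDerivWithinAt f (f' x) (Ici x) x) (ha : f a ≤ K)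
    (hK : ∀ x ∈ Ico a b, K < f x → f' x ≤ 0) {x : ℝ} (hx : x ∈ Icc a b) : f x ≤ K := by
  have hbarrier : ∀ δ > 0, f x ≤ K + δ * (1 + (x - a)) := by
    intro δ hδ
    refine image_le_of_deriv_right_lt_deriv_boundary hf hf'
      (B := fun y => K + δ * (1 + (y - a))) (B' := fun _ => δ) (by linarith)
      (fun y => ?_) (fun y hy hfy => ?_) hx
    · simpa using (((hasDerivAt_id y).sub_const a).const_add 1).const_mul δ |>.const_add K
    · refine (hK y hy ?_).trans_lt hδ
      rw [hfy]
      nlinarith [hy.1]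
  refine le_of_forall_pos_le_add fun ε hε => ?_
  have hlen : 0 < 1 + (x - a) := by linarith [hx.1]
  simpa [div_mul_cancel₀ _ hlen.ne'] using hbarrier (ε / (1 + (x - a))) (div_pos hε hlen)

section Penalized

variable {ψ : ℝ → ℝ} {c x a b K : ℝ} {f₁ f₂ g₁ g₂ : ℝ → ℝ}

theorem sub_sub_sub_le_of_penalized (hψ : Antitone ψ) (hψc : Continuous ψ) (hc : 0 ≤ c)
    (hf₁c : ContinuousOn f₁ (Icc a b)) (hf₂c : ContinuousOn f₂ (Icc a b))
    (hK : ∀ t ∈ Icc a b, |g₁ t - g₂ t| ≤ K)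
    (hf₁ : ∀ t ∈ Icc a b, f₁ t = x + c * (∫ s in a..t, ψ (f₁ s)) + g₁ t)
    (hf₂ : ∀ t ∈ Icc a b, f₂ t = x + c * (∫ s in a..t, ψ (f₂ s)) + g₂ t)
    {t : ℝ} (ht : t ∈ Icc a b) :
    f₁ t - f₂ t - (g₁ t - g₂ t) ≤ K := by
  set φ : ℝ → ℝ := fun s => ψ (f₁ s) - ψ (f₂ s)
  set D : ℝ → ℝ := fun u => c * ∫ s in a..u, φ s
  have hφc : ContinuousOn φ (Icc a b) :=
    (hψc.comp_continuousOn hf₁c).sub (hψc.comp_continuousOn hf₂c)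
  have hD' : ∀ u ∈ Icc a b, HasDerivWithinAt D (c * φ u) (Icc a b) u := fun u hu =>
    (hasDerivWithinAt_integral_Icc hφc hu).const_mul c
  have hD_eq : ∀ u ∈ Icc a b, D u = f₁ u - f₂ u - (g₁ u - g₂ u) := by
    intro u hu
    have hsub : Icc a u ⊆ Icc a b := Icc_subset_Icc_right hu.2
    have hint : ∀ f, ContinuousOn f (Icc a b) →
        IntervalIntegrable (fun s => ψ (f s)) MeasureTheory.volume a u := fun f hf =>
      ((hψc.comp_continuousOn hf).mono hsub).intervalIntegrable_of_Icc hu.1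
    simp only [D, φ, integral_sub (hint f₁ hf₁c) (hint f₂ hf₂c)]
    linarith [hf₁ u hu, hf₂ u hu]
  rw [← hD_eq t ht]
  refine le_of_hasDerivWithinAt_Ici_nonpos_of_lt (fun u hu => (hD' u hu).continuousWithinAt)
    (fun u hu => (hD' u (Ico_subset_Icc_self hu)).mono_of_mem_nhdsWithin
      (Icc_mem_nhdsGE_of_mem hu)) ?_ (fun u hu hKu => ?_) ht
  · simpa [D] using (abs_nonneg _).trans (hK a ⟨le_rfl, ht.1.trans ht.2⟩)
  · have hu' := Ico_subset_Icc_self hu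
    have hf₂₁ : f₂ u ≤ f₁ u := by
      linarith [hD_eq u hu', neg_abs_le (g₁ u - g₂ u), hK u hu']
    exact mul_nonpos_of_nonneg_of_nonpos hc (sub_nonpos.mpr (hψ hf₂₁))

theorem abs_sub_le_two_mul_of_penalized (hψ : Antitone ψ) (hψc : Continuous ψ) (hc : 0 ≤ c)
    (hf₁c : ContinuousOn f₁ (Icc a b)) (hf₂c : ContinuousOn f₂ (Icc a b))
    (hK : ∀ t ∈ Icc a b, |g₁ t - g₂ t| ≤ K)
    (hf₁ : ∀ t ∈ Icc a b, f₁ t = x + c * (∫ s in a..t, ψ (f₁ s)) + g₁ t)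
    (hf₂ : ∀ t ∈ Icc a b, f₂ t = x + c * (∫ s in a..t, ψ (f₂ s)) + g₂ t)
    {t : ℝ} (ht : t ∈ Icc a b) :
    |f₁ t - f₂ t| ≤ 2 * K := by
  have hK' : ∀ t ∈ Icc a b, |g₂ t - g₁ t| ≤ K := fun t ht => abs_sub_comm (g₂ t) _ ▸ hK t ht
  have h₁₂ := sub_sub_sub_le_of_penalized hψ hψc hc hf₁c hf₂c hK hf₁ hf₂ ht
  have h₂₁ := sub_sub_sub_le_of_penalized hψ hψc hc hf₂c hf₁c hK' hf₂ hf₁ ht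
  have hg := abs_le.mp (hK t ht)
  rw [abs_le]
  constructor <;> linarith

end Penalized

theorem penalized_ODE_stability_general (g₁ g₁' g₂ g₂' : ℝ → ℝ) (x ε : ℝ)
    (hε : 0 < ε)
    (hg₁' : ∀ t ∈ Icc (0 : ℝ) 1, HasDerivWithinAt g₁ (g₁' t) (Icc 0 1) t)
    (hg₂' : ∀ t ∈ Icc (0 : ℝ) 1, HasDerivWithinAt g₂ (g₂' t) (Icc 0 1) t)
    (f₁ f₂ : ℝ → ℝ)
    (hf₁c : ContinuousOn f₁ (Icc 0 1)) (hf₂c : ContinuousOn f₂ (Icc 0 1))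
    (hf₁ : ∀ t ∈ Icc (0 : ℝ) 1,
      f₁ t = x + ε⁻¹ * (∫ s in (0 : ℝ)..t, max (-(f₁ s)) 0) + g₁ t)
    (hf₂ : ∀ t ∈ Icc (0 : ℝ) 1,
      f₂ t = x + ε⁻¹ * (∫ s in (0 : ℝ)..t, max (-(f₂ s)) 0) + g₂ t) :
    ∀ t ∈ Icc (0 : ℝ) 1,
      |f₁ t - f₂ t| ≤ 2 * sSup ((fun s => |g₁ s - g₂ s|) '' Icc 0 1) := by
  have hg₁c : ContinuousOn g₁ (Icc 0 1) := fun s hs => (hg₁' s hs).continuousWithinAt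
  have hg₂c : ContinuousOn g₂ (Icc 0 1) := fun s hs => (hg₂' s hs).continuousWithinAt
  have hgc : ContinuousOn (fun s => |g₁ s - g₂ s|) (Icc 0 1) := (hg₁c.sub hg₂c).abs
  have hK : ∀ t ∈ Icc (0 : ℝ) 1, |g₁ t - g₂ t| ≤ sSup ((fun s => |g₁ s - g₂ s|) '' Icc 0 1) :=
    fun t ht => le_csSup (isCompact_Icc.bddAbove_image hgc) (mem_image_of_mem _ ht)
  have hnegPart : Antitone fun z : ℝ => max (-z) 0 := fun _ _ h => max_le_max (neg_le_neg h) le_rfl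
  exact fun t ht => abs_sub_le_two_mul_of_penalized hnegPart (by fun_prop)
    (inv_nonneg.mpr hε.le) hf₁c hf₂c hK hf₁ hf₂ ht

/-- Stability of the penalized ODE in the driver, uniformly in `ε`:
`sup_{[0,1]} |f₁^ε - f₂^ε| ≤ 2 sup_{[0,1]} |g₁ - g₂|`. -/
theorem penalized_ODE_stability (g₁ g₁' g₂ g₂' : ℝ → ℝ) (x ε : ℝ)
    (hx : 0 ≤ x) (hε : 0 < ε) (hg₁0 : g₁ 0 = 0) (hg₂0 : g₂ 0 = 0)
    (hg₁' : ∀ t ∈ Icc (0 : ℝ) 1, HasDerivWithinAt g₁ (g₁' t) (Icc 0 1) t)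
    (hg₁'c : ContinuousOn g₁' (Icc 0 1))
    (hg₂' : ∀ t ∈ Icc (0 : ℝ) 1, HasDerivWithinAt g₂ (g₂' t) (Icc 0 1) t)
    (hg₂'c : ContinuousOn g₂' (Icc 0 1))
    (f₁ f₂ : ℝ → ℝ)
    (hf₁c : ContinuousOn f₁ (Icc 0 1)) (hf₂c : ContinuousOn f₂ (Icc 0 1))
    (hf₁ : ∀ t ∈ Icc (0 : ℝ) 1,
      f₁ t = x + ε⁻¹ * (∫ s in (0 : ℝ)..t, max (-(f₁ s)) 0) + g₁ t)
    (hf₂ : ∀ t ∈ Icc (0 : ℝ) 1,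
      f₂ t = x + ε⁻¹ * (∫ s in (0 : ℝ)..t, max (-(f₂ s)) 0) + g₂ t) :
    ∀ t ∈ Icc (0 : ℝ) 1,
      |f₁ t - f₂ t| ≤ 2 * sSup ((fun s => |g₁ s - g₂ s|) '' Icc 0 1) :=
  penalized_ODE_stability_general g₁ g₁' g₂ g₂' x ε hε hg₁' hg₂' f₁ f₂ hf₁c hf₂c hf₁ hf₂
end

section
/- Let g ∈ C([0,1]) with g(0) = 0 and x ≥ 0. For ε > 0 let f_g^ε solve f_g^ε(t) = x + ε⁻¹∫₀ᵗ (f_g^ε(s))⁻ ds + g(t). Then f_g^ε converges in C([0,1]) (supremum norm) as ε → 0 to the solution f of the Skorohod equation with driver g and initial value x. -/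
/-!
Write `φ_ε = F_ε - x - g = ε⁻¹ ∫₀ᵗ (F_ε)⁻`, a nondecreasing function. On an excursion of `φ_ε`
above the Skorohod regulator `φ` the solution `F_ε = x + φ_ε + g ≥ x + φ + g ≥ 0` is positive,
so `φ_ε` stays constant there; hence `φ_ε ≤ φ`. Conversely, for small `ε` we have `F_ε ≥ -2η`
uniformly: a short stay below `-η` is ruled out by the modulus of continuity of `g`, and on a
long one the penalty outgrows the oscillation of `g`. Then `φ_ε + 2η` is a nonnegative
nondecreasing majorant of `-(x + g)`, so `φ ≤ φ_ε + 2η` by minimality of `φ`.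
-/

open Set Filter intervalIntegral

theorem IsClosed.exists_last_mem {α : Type*} [ConditionallyCompleteLinearOrder α]
    [TopologicalSpace α] [OrderTopology α] {S : Set α} (hS : IsClosed S) {a u : α}
    (ha : a ∈ S) (hau : a ≤ u) (hu : u ∉ S) :
    ∃ s ∈ S, a ≤ s ∧ s < u ∧ ∀ v ∈ Ioc s u, v ∉ S := by
  have hK : IsCompact (S ∩ Icc a u) := isCompact_Icc.inter_left hS
  have hKa : a ∈ S ∩ Icc a u := ⟨ha, left_mem_Icc.2 hau⟩
  obtain ⟨hsS, has, hsu⟩ := hK.sSup_mem ⟨a, hKa⟩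
  refine ⟨_, hsS, has, lt_of_le_of_ne hsu (ne_of_mem_of_not_mem hsS hu), fun v hv hvS => ?_⟩
  exact hv.1.not_ge (le_csSup hK.bddAbove ⟨hvS, hv.1.le.trans' has, hv.2⟩)

noncomputable def skorohodRegulator (x : ℝ) (g : ℝ → ℝ) (t : ℝ) : ℝ :=
  max 0 (sSup ((fun s => -(x + g s)) '' Icc 0 t))

section skorohodRegulator

variable {x t v c : ℝ} {g : ℝ → ℝ}

theorem neg_add_le_skorohodRegulator (hg : ContinuousOn g (Icc 0 t)) (hv : v ∈ Icc 0 t) :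
    -(x + g v) ≤ skorohodRegulator x g t := by
  have hbdd : BddAbove ((fun s => -(x + g s)) '' Icc 0 t) :=
    (isCompact_Icc.image_of_continuousOn (continuousOn_const.add hg).neg).bddAbove
  exact le_max_of_le_right (le_csSup hbdd (mem_image_of_mem _ hv))

theorem skorohodRegulator_le (ht : 0 ≤ t) (hc : 0 ≤ c) (h : ∀ v ∈ Icc 0 t, -(x + g v) ≤ c) :
    skorohodRegulator x g t ≤ c :=
  max_le hc (csSup_le ((nonempty_Icc.2 ht).image _) (forall_mem_image.2 h))

end skorohodRegulator

structure IsPenalizedSolution (ε x : ℝ) (g : ℝ → ℝ) (T : ℝ) (F : ℝ → ℝ) : Prop where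
  continuousOn : ContinuousOn F (Icc 0 T)
  eq : ∀ t ∈ Icc 0 T, F t = x + ε⁻¹ * (∫ s in (0 : ℝ)..t, max (-F s) 0) + g t

namespace IsPenalizedSolution

variable {ε x T a b u c η d M : ℝ} {g F : ℝ → ℝ}

theorem intervalIntegrable (hF : IsPenalizedSolution ε x g T F) (ha : a ∈ Icc 0 T)
    (hb : b ∈ Icc 0 T) : IntervalIntegrable (fun s => max (-F s) 0) MeasureTheory.volume a b :=
  ((continuous_neg.max continuous_const).comp_continuousOn hF.continuousOn
    |>.mono (uIcc_subset_Icc ha hb)).intervalIntegrable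

theorem sub_eq (hF : IsPenalizedSolution ε x g T F) (ha : a ∈ Icc 0 T) (hb : b ∈ Icc 0 T) :
    F b - F a = ε⁻¹ * (∫ s in a..b, max (-F s) 0) + (g b - g a) := by
  have h0 : (0 : ℝ) ∈ Icc 0 T := ⟨le_rfl, ha.1.trans ha.2⟩
  rw [hF.eq b hb, hF.eq a ha, ← integral_add_adjacent_intervals
    (hF.intervalIntegrable h0 ha) (hF.intervalIntegrable ha hb)]
  ring

theorem apply_zero (hF : IsPenalizedSolution ε x g T F) (hT : 0 ≤ T) : F 0 = x + g 0 := by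
  simpa using hF.eq 0 ⟨le_rfl, hT⟩

theorem monotoneOn_sub (hF : IsPenalizedSolution ε x g T F) (hε : 0 < ε) :
    MonotoneOn (fun t => F t - g t) (Icc 0 T) := by
  intro a ha b hb hab
  have hpen : 0 ≤ ε⁻¹ * ∫ s in a..b, max (-F s) 0 :=
    mul_nonneg (inv_nonneg.2 hε.le) (integral_nonneg hab fun _ _ => le_max_right _ _)
  linarith [hF.sub_eq ha hb]

theorem sub_le_of_forall_neg_add_le (hF : IsPenalizedSolution ε x g T F)
    (hg : ContinuousOn g (Icc 0 T)) (hu : u ∈ Icc 0 T) (hc : 0 ≤ c)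
    (h : ∀ v ∈ Icc 0 u, -(x + g v) ≤ c) : F u - g u ≤ x + c := by
  by_contra hlt
  have h0 : (0 : ℝ) ∈ Icc 0 T := ⟨le_rfl, hu.1.trans hu.2⟩
  have hS : IsClosed (Icc 0 T ∩ (fun t => F t - g t) ⁻¹' Iic (x + c)) :=
    (hF.continuousOn.sub hg).preimage_isClosed_of_isClosed isClosed_Icc isClosed_Iic
  obtain ⟨s, ⟨hsT, hsc⟩, -, hsu, hlast⟩ := hS.exists_last_mem
    ⟨h0, by simpa [hF.apply_zero h0.2] using hc⟩ hu.1 (fun hS => hlt hS.2)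
  have hoff : ∫ v in s..u, max (-F v) 0 = ∫ _ in s..u, (0 : ℝ) := by
    refine integral_congr_Ioo_of_le hsu.le fun v hv => max_eq_right ?_
    have hvT : v ∈ Icc 0 T := ⟨hsT.1.trans hv.1.le, hv.2.le.trans hu.2⟩
    have hvc : x + c < F v - g v := not_le.1 fun hle => hlast v (Ioo_subset_Ioc_self hv) ⟨hvT, hle⟩
    linarith [h v ⟨hvT.1, hv.2.le⟩]
  have := hF.sub_eq hsT hu
  rw [hoff, integral_zero, mul_zero] at this
  exact hlt (by simp only [mem_preimage, mem_Iic] at hsc; linarith)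

theorem neg_two_mul_le (hF : IsPenalizedSolution ε x g T F) (hε : 0 < ε) (hx : 0 ≤ x + g 0)
    (hη : 0 ≤ η) (hd : ∀ a ∈ Icc 0 T, ∀ b ∈ Icc 0 T, dist a b < d → dist (g a) (g b) < η)
    (hM : ∀ a ∈ Icc 0 T, ∀ b ∈ Icc 0 T, g a - g b ≤ M) (hεM : ε * M ≤ d * η)
    (hu : u ∈ Icc 0 T) : -(2 * η) ≤ F u := by
  by_contra hlt
  have h0 : (0 : ℝ) ∈ Icc 0 T := ⟨le_rfl, hu.1.trans hu.2⟩
  have hS : IsClosed (Icc 0 T ∩ F ⁻¹' Ici (-η)) :=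
    hF.continuousOn.preimage_isClosed_of_isClosed isClosed_Icc isClosed_Ici
  obtain ⟨s, ⟨hsT, hsη⟩, -, hsu, hlast⟩ := hS.exists_last_mem
    ⟨h0, by simp only [mem_preimage, mem_Ici, hF.apply_zero h0.2]; linarith⟩ hu.1
    fun huS => hlt (by linarith [show -η ≤ F u from huS.2])
  have hpen : (u - s) * η ≤ ∫ v in s..u, max (-F v) 0 := by
    rw [← smul_eq_mul, ← integral_const]
    refine integral_mono_on_of_le_Ioo hsu.le intervalIntegrable_const
      (hF.intervalIntegrable hsT hu) fun v hv => le_max_of_le_left ?_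
    have hvT : v ∈ Icc 0 T := ⟨hsT.1.trans hv.1.le, hv.2.le.trans hu.2⟩
    have hvη : F v < -η := not_le.1 fun hle => hlast v (Ioo_subset_Ioc_self hv) ⟨hvT, hle⟩
    linarith
  have hrise : -η ≤ F u - F s := by
    rcases lt_or_ge (u - s) d with hshort | hlong
    · have hgsu : dist (g s) (g u) < η :=
        hd s hsT u hu (by rwa [Real.dist_eq, abs_sub_comm, abs_of_pos (sub_pos.2 hsu)])
      have := (le_abs_self _).trans_lt (Real.dist_eq _ _ ▸ hgsu)
      linarith [hF.monotoneOn_sub hε hsT hu hsu.le]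
    · have hMle : M ≤ ε⁻¹ * (d * η) := (le_inv_mul_iff₀ hε).2 hεM
      have : d * η ≤ ∫ v in s..u, max (-F v) 0 :=
        (mul_le_mul_of_nonneg_right hlong hη).trans hpen
      have := mul_le_mul_of_nonneg_left this (inv_nonneg.2 hε.le)
      linarith [hM s hsT u hu, hF.sub_eq hsT hu]
  linarith [show -η ≤ F s from hsη]

theorem abs_sub_skorohod_le (hF : IsPenalizedSolution ε x g T F) (hε : 0 < ε)
    (hg : ContinuousOn g (Icc 0 T)) (hx : 0 ≤ x + g 0) (hη : 0 ≤ η)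
    (hd : ∀ a ∈ Icc 0 T, ∀ b ∈ Icc 0 T, dist a b < d → dist (g a) (g b) < η)
    (hM : ∀ a ∈ Icc 0 T, ∀ b ∈ Icc 0 T, g a - g b ≤ M) (hεM : ε * M ≤ d * η)
    (hu : u ∈ Icc 0 T) : |F u - (x + skorohodRegulator x g u + g u)| ≤ 2 * η := by
  have hgu : ContinuousOn g (Icc 0 u) := hg.mono (Icc_subset_Icc_right hu.2)
  have hvT {v} (hv : v ∈ Icc 0 u) : v ∈ Icc 0 T := ⟨hv.1, hv.2.trans hu.2⟩
  have hmono := hF.monotoneOn_sub hε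
  have hupper : F u - g u ≤ x + skorohodRegulator x g u :=
    hF.sub_le_of_forall_neg_add_le hg hu (le_max_left _ _)
      fun v hv => neg_add_le_skorohodRegulator hgu hv
  have hlower : skorohodRegulator x g u ≤ F u - g u - x + 2 * η := by
    refine skorohodRegulator_le hu.1 ?_ fun v hv => ?_
    · have : F 0 - g 0 ≤ F u - g u := hmono ⟨le_rfl, hu.1.trans hu.2⟩ hu hu.1
      linarith [hF.apply_zero (hu.1.trans hu.2)]
    · have := hmono (hvT hv) hu hv.2
      linarith [hF.neg_two_mul_le hε hx hη hd hM hεM (hvT hv)]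
  rw [abs_sub_le_iff]
  constructor <;> linarith

end IsPenalizedSolution

/-- Penalization approximation with merely continuous driver: for `g ∈ C([0,1])`,
`g 0 = 0`, `x ≥ 0`, the penalized solutions `F ε` converge uniformly on `[0,1]`,
as `ε → 0⁺`, to the Skorohod solution
`f t = x + φ t + g t` with `φ t = max {0, max_{0 ≤ s ≤ t} -(x + g s)}`. -/
theorem penalized_ODE_to_skorohod_continuous (g : ℝ → ℝ) (x : ℝ)
    (hg : ContinuousOn g (Icc 0 1)) (hg0 : g 0 = 0) (hx : 0 ≤ x)
    (F : ℝ → ℝ → ℝ)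
    (hFc : ∀ ε : ℝ, 0 < ε → ContinuousOn (F ε) (Icc 0 1))
    (hF : ∀ ε : ℝ, 0 < ε → ∀ t ∈ Icc (0 : ℝ) 1,
      F ε t = x + ε⁻¹ * (∫ s in (0 : ℝ)..t, max (-(F ε s)) 0) + g t)
    (φ f : ℝ → ℝ)
    (hφ : ∀ t, φ t = max 0 (sSup ((fun s => -(x + g s)) '' Icc 0 t)))
    (hf : ∀ t, f t = x + φ t + g t) :
    TendstoUniformlyOn F f (nhdsWithin 0 (Ioi (0 : ℝ))) (Icc 0 1) := by
  rw [Metric.tendstoUniformlyOn_iff]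
  intro δ hδ
  obtain ⟨d, hd, hgd⟩ := Metric.uniformContinuousOn_iff.1
    (isCompact_Icc.uniformContinuousOn_of_continuous hg) (δ / 4) (by positivity)
  obtain ⟨G, hG⟩ := isCompact_Icc.exists_bound_of_continuousOn hg
  have hM : ∀ a ∈ Icc (0 : ℝ) 1, ∀ b ∈ Icc (0 : ℝ) 1, g a - g b ≤ 2 * G := fun a ha b hb => by
    linarith [abs_le.1 (hG a ha), abs_le.1 (hG b hb)]
  have hεM : ∀ᶠ ε in nhdsWithin 0 (Ioi (0 : ℝ)), ε * (2 * G) ≤ d * (δ / 4) :=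
    ((continuous_mul_const _).tendsto' 0 0 (zero_mul _)).mono_left nhdsWithin_le_nhds
      |>.eventually_le_const (by positivity)
  filter_upwards [self_mem_nhdsWithin, hεM] with ε hε hεM t ht
  have hsol : IsPenalizedSolution ε x g 1 (F ε) := ⟨hFc ε hε, hF ε hε⟩
  have := hsol.abs_sub_skorohod_le hε hg (by rw [hg0]; linarith) (by positivity) hgd hM hεM ht
  rw [dist_comm, Real.dist_eq, hf t, show φ = skorohodRegulator x g from funext hφ]
  linarith
end
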